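/- arXiv:1010.4202 — 4 statements merged into one kernel-verified Lean document; each statement's English description precedes it below -/
import Mathlib

section
/- For r, s ≥ 0 and φ ∈ [0,2π), write the point e^{s}·(k_{−φ}·(e^{−r} i)) ∈ ℍ in polar coordinates as k_η·(e^{−R} i) with R = R(r,s,φ) ≥ 0 (so R is the hyperbolic distance from i to this point). Then cosh(R(r,s,φ)) = −cos(2φ) sinh r sinh s + cosh r cosh s. -/
open MeasureTheory Real Complex Filter

noncomputable section

/-- Möbius action of `SL(2,ℝ)` on `ℂ`. -/
def moebius (g : Matrix.SpecialLinearGroup (Fin 2) ℝ) (z : ℂ) : ℂ :=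
  ((g.1 0 0 : ℝ) * z + (g.1 0 1 : ℝ)) / ((g.1 1 0 : ℝ) * z + (g.1 1 1 : ℝ))

/-- The rotation `k_u ∈ SO(2) ⊆ SL(2,ℝ)`. -/
def kmat (u : ℝ) : Matrix.SpecialLinearGroup (Fin 2) ℝ :=
  ⟨!![Real.cos u, Real.sin u; -Real.sin u, Real.cos u], by
    simp [Matrix.det_fin_two_of]
    nlinarith [Real.sin_sq_add_cos_sq u]⟩

/-- The diagonal matrix `R_r = diag (e^{-r/2}, e^{r/2}) ∈ SL(2,ℝ)`. -/
def Rmat (r : ℝ) : Matrix.SpecialLinearGroup (Fin 2) ℝ :=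
  ⟨!![Real.exp (-r/2), 0; 0, Real.exp (r/2)], by
    simp [Matrix.det_fin_two_of, ← Real.exp_add]
    ring_nf⟩

/-- The hyperbolic measure `y⁻² dx dy` on the upper half plane, as a measure on `ℂ`. -/
def hypMeasure : Measure ℂ :=
  (volume.withDensity fun z => ENNReal.ofReal (1 / z.im ^ 2)).restrict {z | 0 < z.im}

def SO2Invariant (f : ℂ → ℝ) : Prop := ∀ (u : ℝ) (z : ℂ), f (moebius (kmat u) z) = f z

/-- `cosh` of the hyperbolic distance from `i` to `z`: `(1 + x² + y²)/(2y)` for `z = x+iy`. -/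
def coshDistI (z : ℂ) : ℝ := (1 + z.re ^ 2 + z.im ^ 2) / (2 * z.im)

/-- The hyperbolic polar radius of `z`, i.e. the hyperbolic distance from `i` to `z`
(`arcosh` of `coshDistI z`). -/
def radl (z : ℂ) : ℝ := Real.log (coshDistI z + Real.sqrt (coshDistI z ^ 2 - 1))

/-- The Legendre function `P_a(c) = (1/2π) ∫₀^{2π} (c + √(c²−1) cos φ)^a dφ`, complex degree. -/
def legendreC (a : ℂ) (c : ℝ) : ℂ :=
  (1 / (2 * π) : ℝ) *
    ∫ φ in Set.Ioo (0:ℝ) (2*π), ((c + Real.sqrt (c ^ 2 - 1) * Real.cos φ : ℝ) : ℂ) ^ a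

/-- The Legendre function `P_a(c)`, real degree. -/
def legendreR (a : ℝ) (c : ℝ) : ℝ :=
  (1 / (2 * π)) * ∫ φ in Set.Ioo (0:ℝ) (2*π), (c + Real.sqrt (c ^ 2 - 1) * Real.cos φ) ^ a

/-- The Helgason–Fourier transform of an `SO(2)`-invariant function, in radial form:
`ℋf(1/2+it) = 2π ∫₀^∞ f(e^{-r} i) P_{-1/2+it}(cosh r) sinh r dr`. -/
def helgasonRad (f : ℂ → ℝ) (t : ℝ) : ℂ :=
  (2 * π : ℝ) * ∫ r in Set.Ioi (0:ℝ),
    (f ((Real.exp (-r) : ℝ) * Complex.I) : ℂ) *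
      legendreC (-(1/2) + t * Complex.I) (Real.cosh r) * (Real.sinh r : ℝ)

/-- The dilation `H^δ(k·(e^{-r}i)) = H(k·(e^{-δr}i)) (sinh(δr)/sinh r) P_{-1/2}(cosh(δr))`
of an `SO(2)`-invariant function. -/
def dilate (H : ℂ → ℝ) (δ : ℝ) (z : ℂ) : ℝ :=
  H ((Real.exp (-(δ * radl z)) : ℝ) * Complex.I) *
    (Real.sinh (δ * radl z) / Real.sinh (radl z)) *
    legendreR (-(1/2)) (Real.cosh (δ * radl z))

/-- Squared `L²(ℍ, dz)` norm of a real function. -/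
def L2sqR (f : ℂ → ℝ) : ℝ := ∫ z, f z ^ 2 ∂hypMeasure

/-- The convolution of a bi-invariant density with an `SO(2)`-invariant function,
in polar coordinates:
`(f_ε * h)(z) = 2π ∫₀^{2π} ∫₀^∞ f_ε(e^{-s}i) h(e^s·(k_{-φ}·z)) sinh s ds dφ`. -/
def convPolar (fε h : ℂ → ℝ) (z : ℂ) : ℝ :=
  2 * π * ∫ φ in Set.Ioo (0:ℝ) (2*π), ∫ s in Set.Ioi (0:ℝ),
    fε ((Real.exp (-s) : ℝ) * Complex.I) *
      h ((Real.exp s : ℝ) * moebius (kmat (-φ)) z) * Real.sinh s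

end

section
open MeasureTheory Real Complex Filter

/-! The map `z ↦ (coshDistI z, hyperboloidX₁ z, hyperboloidX₂ z)` sends `ℍ` onto the hyperboloid
`X₀² - X₁² - X₂² = 1`, and `SL(2,ℝ)` acts on it by Lorentz transformations: the rotation `k_u`
rotates the `(X₁, X₂)`-plane by the angle `2u`, and the dilation by `e^s` is the boost of rapidity
`s` in the `(X₀, X₁)`-plane. The point `e^{-r} i` has coordinates `(cosh r, -sinh r, 0)`, so
rotating it by `k_{-φ}` and then boosting gives `X₀ = cosh s cosh r - sinh s cos(2φ) sinh r`. -/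

noncomputable def hyperboloidX₁ (z : ℂ) : ℝ := (normSq z - 1) / (2 * z.im)

noncomputable def hyperboloidX₂ (z : ℂ) : ℝ := z.re / z.im

lemma coshDistI_eq (z : ℂ) : coshDistI z = (1 + normSq z) / (2 * z.im) := by
  rw [coshDistI, normSq_apply]
  ring

lemma coshDistI_exp_mul (s : ℝ) (z : ℂ) :
    coshDistI ((Real.exp s : ℝ) * z) =
      Real.cosh s * coshDistI z + Real.sinh s * hyperboloidX₁ z := by
  rw [coshDistI_eq, coshDistI_eq, hyperboloidX₁, Real.cosh_eq, Real.sinh_eq, normSq_mul,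
    normSq_ofReal, im_ofReal_mul, Real.exp_neg]
  rcases eq_or_ne z.im 0 with hz | hz
  · simp [hz]
  field_simp
  ring

lemma moebius_denom_ne_zero (g : Matrix.SpecialLinearGroup (Fin 2) ℝ) {z : ℂ}
    (hz : z.im ≠ 0) :
    ((g.1 1 0 : ℝ) : ℂ) * z + (g.1 1 1 : ℝ) ≠ 0 := by
  intro h
  have hc : g.1 1 0 = 0 := by simpa [hz] using congrArg im h
  have hd : g.1 1 1 = 0 := by simpa [hc] using congrArg re h
  have hdet := g.det_coe
  rw [Matrix.det_fin_two, hc, hd] at hdet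
  simp at hdet

lemma moebius_im (g : Matrix.SpecialLinearGroup (Fin 2) ℝ) (z : ℂ) :
    (moebius g z).im = z.im / normSq (((g.1 1 0 : ℝ) : ℂ) * z + (g.1 1 1 : ℝ)) := by
  have hdet := g.det_coe
  rw [Matrix.det_fin_two] at hdet
  rw [moebius, div_im]
  simp only [add_re, add_im, re_ofReal_mul, im_ofReal_mul, ofReal_re, ofReal_im]
  rw [← sub_div]
  congr 1
  linear_combination z.im * hdet

section Rotation

variable (u : ℝ) (z : ℂ)

lemma im_moebius_kmat :
    (moebius (kmat u) z).im = z.im / normSq ((-Real.sin u : ℝ) * z + (Real.cos u : ℝ)) :=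
  moebius_im (kmat u) z

lemma normSq_moebius_kmat :
    normSq (moebius (kmat u) z) =
      normSq ((Real.cos u : ℝ) * z + (Real.sin u : ℝ)) /
        normSq ((-Real.sin u : ℝ) * z + (Real.cos u : ℝ)) :=
  normSq_div _ _

lemma normSq_kmat_numer_add_denom :
    normSq ((Real.cos u : ℝ) * z + (Real.sin u : ℝ)) +
        normSq ((-Real.sin u : ℝ) * z + (Real.cos u : ℝ)) = normSq z + 1 := by
  simp only [normSq_apply, add_re, add_im, re_ofReal_mul, im_ofReal_mul, ofReal_re, ofReal_im]
  linear_combination (z.re ^ 2 + z.im ^ 2 + 1) * Real.sin_sq_add_cos_sq u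

lemma normSq_kmat_numer_sub_denom :
    normSq ((Real.cos u : ℝ) * z + (Real.sin u : ℝ)) -
        normSq ((-Real.sin u : ℝ) * z + (Real.cos u : ℝ)) =
      Real.cos (2 * u) * (normSq z - 1) + Real.sin (2 * u) * (2 * z.re) := by
  rw [Real.cos_two_mul, Real.sin_two_mul]
  simp only [normSq_apply, add_re, add_im, re_ofReal_mul, im_ofReal_mul, ofReal_re, ofReal_im]
  linear_combination (1 - z.re ^ 2 - z.im ^ 2) * Real.sin_sq_add_cos_sq u

lemma coshDistI_moebius_kmat : coshDistI (moebius (kmat u) z) = coshDistI z := by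
  rcases eq_or_ne z.im 0 with hz | hz
  · simp [coshDistI, im_moebius_kmat, hz]
  have hQ : 0 < normSq ((-Real.sin u : ℝ) * z + (Real.cos u : ℝ)) :=
    normSq_pos.2 (moebius_denom_ne_zero (kmat u) hz)
  rw [coshDistI_eq, coshDistI_eq, im_moebius_kmat, normSq_moebius_kmat, add_comm 1 (normSq z),
    ← normSq_kmat_numer_add_denom u z]
  generalize normSq ((-Real.sin u : ℝ) * z + (Real.cos u : ℝ)) = Q at hQ ⊢
  field_simp
  ring

lemma hyperboloidX₁_moebius_kmat :
    hyperboloidX₁ (moebius (kmat u) z) =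
      Real.cos (2 * u) * hyperboloidX₁ z + Real.sin (2 * u) * hyperboloidX₂ z := by
  rcases eq_or_ne z.im 0 with hz | hz
  · simp [hyperboloidX₁, hyperboloidX₂, im_moebius_kmat, hz]
  have hQ : 0 < normSq ((-Real.sin u : ℝ) * z + (Real.cos u : ℝ)) :=
    normSq_pos.2 (moebius_denom_ne_zero (kmat u) hz)
  have hdiff := normSq_kmat_numer_sub_denom u z
  rw [hyperboloidX₁, hyperboloidX₁, hyperboloidX₂, im_moebius_kmat, normSq_moebius_kmat]
  generalize normSq ((-Real.sin u : ℝ) * z + (Real.cos u : ℝ)) = Q at hQ hdiff ⊢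
  field_simp
  linear_combination hdiff

end Rotation

lemma coshDistI_exp_neg_mul_I (r : ℝ) : coshDistI ((Real.exp (-r) : ℝ) * I) = Real.cosh r := by
  rw [coshDistI_eq, normSq_mul, normSq_ofReal, normSq_I, im_ofReal_mul, I_im, Real.cosh_eq,
    Real.exp_neg]
  field_simp

lemma hyperboloidX₁_exp_neg_mul_I (r : ℝ) :
    hyperboloidX₁ ((Real.exp (-r) : ℝ) * I) = -Real.sinh r := by
  rw [hyperboloidX₁, normSq_mul, normSq_ofReal, normSq_I, im_ofReal_mul, I_im, Real.sinh_eq,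
    Real.exp_neg]
  field_simp
  ring

lemma hyperboloidX₂_ofReal_mul_I (a : ℝ) : hyperboloidX₂ ((a : ℂ) * I) = 0 := by
  simp [hyperboloidX₂]

theorem cosh_polar_radius_formula_general
    (r s φ : ℝ) :
    coshDistI ((Real.exp s : ℝ) * moebius (kmat (-φ)) ((Real.exp (-r) : ℝ) * Complex.I)) =
      -Real.cos (2*φ) * Real.sinh r * Real.sinh s + Real.cosh r * Real.cosh s := by
  rw [coshDistI_exp_mul, coshDistI_moebius_kmat, hyperboloidX₁_moebius_kmat,
    coshDistI_exp_neg_mul_I, hyperboloidX₁_exp_neg_mul_I, hyperboloidX₂_ofReal_mul_I,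
    mul_neg 2 φ, Real.cos_neg]
  ring

/-- **Lemma B.3, key computation.** Writing `e^{s}·(k_{−φ}·(e^{−r}i)) = k_η·(e^{−R}i)` in
polar coordinates, `cosh R = −cos(2φ) sinh r sinh s + cosh r cosh s`. -/
theorem cosh_polar_radius_formula
    (r s φ : ℝ) (hr : 0 ≤ r) (hs : 0 ≤ s) (hφ : φ ∈ Set.Ico 0 (2*π)) :
    coshDistI ((Real.exp s : ℝ) * moebius (kmat (-φ)) ((Real.exp (-r) : ℝ) * Complex.I)) =
      -Real.cos (2*φ) * Real.sinh r * Real.sinh s + Real.cosh r * Real.cosh s :=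
  cosh_polar_radius_formula_general r s φ

end
end

section
/- Suppose H : ℍ → ℝ is SO(2)-invariant and r ↦ H(e^{−r} i) is monotonically decreasing on [0,∞). Then for all s ≥ 0, φ ∈ [0, 2π) and r ≥ 0, H( e^{s}·(k_{−φ}·(e^{−r} i)) ) ≤ H( e^{−|r−s|} i ). -/
open MeasureTheory Real Complex Filter

/-! `SO(2)` fixes `i` and acts by hyperbolic isometries, and every point of `ℍ` can be rotated
onto the imaginary axis, so an `SO(2)`-invariant `H` only depends on the distance to `i`:
`H z = H (e^{-d(z,i)} i)`. Dilation by `e^s` is an isometry moving `i` by `s`, so the reverse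
triangle inequality gives `d(e^s k·(e^{-r} i), i) ≥ |d(k·(e^{-r} i), i) - s| = |r - s|`, and
monotonicity of `H` along the imaginary axis concludes. -/

open scoped UpperHalfPlane

namespace UpperHalfPlane

lemma moebius_eq_smul (g : Matrix.SpecialLinearGroup (Fin 2) ℝ) (z : ℍ) :
    moebius g z = ↑(g • z) := by
  rw [coe_specialLinearGroup_apply]
  rfl

lemma moebius_denom_ne_zero (g : Matrix.SpecialLinearGroup (Fin 2) ℝ) (z : ℍ) :
    ((g 1 0 : ℝ) : ℂ) * z + (g 1 1 : ℝ) ≠ 0 :=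
  denom_ne_zero (Matrix.SpecialLinearGroup.mapGL ℝ g) z

lemma coe_kmat_smul (u : ℝ) (z : ℍ) :
    (↑(kmat u • z) : ℂ) = (Real.cos u * z + Real.sin u) / (-Real.sin u * z + Real.cos u) := by
  rw [← moebius_eq_smul]
  simp [moebius, kmat, -Complex.ofReal_cos, -Complex.ofReal_sin]

lemma kmat_denom_ne_zero (u : ℝ) (z : ℍ) : (-Real.sin u * z + Real.cos u : ℂ) ≠ 0 := by
  simpa [kmat, -Complex.ofReal_cos, -Complex.ofReal_sin] using moebius_denom_ne_zero (kmat u) z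

lemma kmat_smul_I (u : ℝ) : kmat u • I = I := by
  ext
  rw [coe_kmat_smul, div_eq_iff (kmat_denom_ne_zero u _), coe_I]
  linear_combination (Real.sin u : ℂ) * Complex.I_sq

noncomputable def imagAxis (y : ℝ) : ℍ := ⟨⟨0, Real.exp y⟩, Real.exp_pos y⟩

lemma coe_imagAxis (y : ℝ) : (imagAxis y : ℂ) = (Real.exp y : ℂ) * Complex.I := by
  apply Complex.ext <;> simp [imagAxis, Complex.exp_ofReal_re]

lemma imagAxis_zero : imagAxis 0 = I := by
  ext
  simp [coe_imagAxis]

lemma dist_imagAxis (a b : ℝ) : dist (imagAxis a) (imagAxis b) = |a - b| :=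
  (isometry_vertical_line 0).dist_eq a b

lemma dist_imagAxis_I (a : ℝ) : dist (imagAxis a) I = |a| := by
  rw [← imagAxis_zero, dist_imagAxis, sub_zero]

lemma exp_smul_imagAxis (s y : ℝ) :
    (⟨Real.exp s, Real.exp_pos s⟩ : {x : ℝ // 0 < x}) • imagAxis y = imagAxis (s + y) := by
  ext
  simp only [coe_pos_real_smul, coe_imagAxis, real_smul, Real.exp_add, ofReal_mul]
  ring

lemma kmat_pi_div_two_smul_imagAxis (y : ℝ) : kmat (π / 2) • imagAxis y = imagAxis (-y) := by
  ext
  rw [coe_kmat_smul, div_eq_iff (kmat_denom_ne_zero _ _)]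
  simp only [coe_imagAxis, Real.cos_pi_div_two, Real.sin_pi_div_two]
  push_cast
  rw [Complex.exp_neg]
  field_simp
  linear_combination Complex.exp (y : ℂ) * Complex.I_sq

lemma re_kmat_smul (u : ℝ) (z : ℍ) : (kmat u • z).re =
    (Real.sin u * Real.cos u * (1 - Complex.normSq z) + (Real.cos u ^ 2 - Real.sin u ^ 2) * z.re) /
      Complex.normSq (-Real.sin u * z + Real.cos u) := by
  rw [← coe_re, coe_kmat_smul, Complex.div_re, ← add_div, Complex.normSq_apply (z : ℂ)]
  congr 1
  simp only [add_re, mul_re, ofReal_re, coe_re, ofReal_im, coe_im, neg_re, add_im, mul_im, neg_im]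
  ring

/-- The numerator of `Re (k_u • z)` takes opposite values at `u = 0` and `u = π / 2`, so it
vanishes in between. -/
lemma exists_kmat_smul_eq_imagAxis (z : ℍ) : ∃ u y, kmat u • z = imagAxis y := by
  set g : ℝ → ℝ := fun u ↦
    Real.sin u * Real.cos u * (1 - Complex.normSq z) + (Real.cos u ^ 2 - Real.sin u ^ 2) * z.re
  have hg : ContinuousOn g (Set.uIcc 0 (π / 2)) := by fun_prop
  have h0 : (0 : ℝ) ∈ Set.uIcc (g 0) (g (π / 2)) := by
    rcases le_total 0 z.re with h | h <;> simp [g, h]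
  obtain ⟨u, -, hu⟩ := intermediate_value_uIcc hg h0
  simp only [g] at hu
  refine ⟨u, Real.log (kmat u • z).im, ext_re_im ?_ ?_⟩
  · rw [re_kmat_smul, hu, zero_div]
    rfl
  · exact (Real.exp_log (kmat u • z).im_pos).symm

lemma dist_kmat_smul_I (u : ℝ) (z : ℍ) : dist (kmat u • z) I = dist z I := by
  conv_lhs => rw [← kmat_smul_I u]
  exact dist_smul _ _ _

lemma abs_dist_I_sub_abs_le_dist_exp_smul (s : ℝ) (z : ℍ) :
    |dist z I - (|s|)| ≤ dist ((⟨Real.exp s, Real.exp_pos s⟩ : {x : ℝ // 0 < x}) • z) I := by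
  set a : {x : ℝ // 0 < x} := ⟨Real.exp s, Real.exp_pos s⟩
  have h_isom : dist (a • z) (a • I) = dist z I := (isometry_pos_mul a).dist_eq z I
  have h_shift : dist I (a • I) = |s| := by
    rw [← imagAxis_zero, exp_smul_imagAxis, dist_imagAxis, zero_sub, add_zero, abs_neg]
  simpa only [h_isom, h_shift] using abs_dist_sub_le (a • z) I (a • I)

end UpperHalfPlane

open UpperHalfPlane

lemma SO2Invariant.apply_kmat_smul {H : ℂ → ℝ} (hH : SO2Invariant H) (u : ℝ) (z : ℍ) :
    H ↑(kmat u • z) = H z := by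
  rw [← moebius_eq_smul, hH]

lemma SO2Invariant.apply_imagAxis_neg {H : ℂ → ℝ} (hH : SO2Invariant H) (y : ℝ) :
    H (imagAxis (-y)) = H (imagAxis y) := by
  rw [← kmat_pi_div_two_smul_imagAxis, hH.apply_kmat_smul]

lemma SO2Invariant.apply_eq_apply_imagAxis_neg_dist {H : ℂ → ℝ} (hH : SO2Invariant H) (z : ℍ) :
    H z = H (imagAxis (-dist z I)) := by
  obtain ⟨u, y, hz⟩ := exists_kmat_smul_eq_imagAxis z
  rw [← hH.apply_kmat_smul u z, ← dist_kmat_smul_I u z, hz, dist_imagAxis_I]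
  rcases abs_choice y with h | h <;> rw [h]
  · rw [hH.apply_imagAxis_neg]
  · rw [neg_neg]

section
open MeasureTheory Real Complex Filter

theorem monotone_invariant_bound_general
    (H : ℂ → ℝ) (hinv : SO2Invariant H)
    (hmono : ∀ r₁ r₂ : ℝ, 0 ≤ r₁ → r₁ ≤ r₂ →
      H ((Real.exp (-r₂) : ℝ) * Complex.I) ≤ H ((Real.exp (-r₁) : ℝ) * Complex.I))
    (s φ r : ℝ) (hs : 0 ≤ s) (hr : 0 ≤ r) :
    H ((Real.exp s : ℝ) * moebius (kmat (-φ)) ((Real.exp (-r) : ℝ) * Complex.I)) ≤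
      H ((Real.exp (-|r - s|) : ℝ) * Complex.I) := by
  set w : ℍ := kmat (-φ) • imagAxis (-r)
  set z : ℍ := (⟨Real.exp s, Real.exp_pos s⟩ : {x : ℝ // 0 < x}) • w
  have hz : ((Real.exp s : ℝ) : ℂ) * moebius (kmat (-φ)) ((Real.exp (-r) : ℝ) * Complex.I) = z := by
    rw [← coe_imagAxis, moebius_eq_smul, coe_pos_real_smul, Complex.real_smul]
  have hdist : |r - s| ≤ dist z UpperHalfPlane.I :=
    calc |r - s| = |dist w UpperHalfPlane.I - (|s|)| := by
          rw [dist_kmat_smul_I, dist_imagAxis_I, abs_neg, abs_of_nonneg hr, abs_of_nonneg hs]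
      _ ≤ dist z UpperHalfPlane.I := abs_dist_I_sub_abs_le_dist_exp_smul s w
  rw [hz, hinv.apply_eq_apply_imagAxis_neg_dist z, coe_imagAxis]
  exact hmono _ _ (abs_nonneg _) hdist

/-- **Lemma B.4.** If `H` is `SO(2)`-invariant and `r ↦ H(e^{−r}i)` is monotonically
decreasing, then `H(e^{s}·(k_{−φ}·(e^{−r}i))) ≤ H(e^{−|r−s|} i)` for `s ≥ 0`,
`φ ∈ [0,2π)`, `r ≥ 0`. -/
theorem monotone_invariant_bound
    (H : ℂ → ℝ) (hinv : SO2Invariant H)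
    (hmono : ∀ r₁ r₂ : ℝ, 0 ≤ r₁ → r₁ ≤ r₂ →
      H ((Real.exp (-r₂) : ℝ) * Complex.I) ≤ H ((Real.exp (-r₁) : ℝ) * Complex.I))
    (s φ r : ℝ) (hs : 0 ≤ s) (hφ : φ ∈ Set.Ico 0 (2*π)) (hr : 0 ≤ r) :
    H ((Real.exp s : ℝ) * moebius (kmat (-φ)) ((Real.exp (-r) : ℝ) * Complex.I)) ≤
      H ((Real.exp (-|r - s|) : ℝ) * Complex.I) :=
  monotone_invariant_bound_general H hinv hmono s φ r hs hr

end
end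

section
/- Suppose H : ℍ → ℝ is SO(2)-invariant with |H(e^{−r} i)| ≤ C₀ e^{−m₀ r} for all r ≥ 0, where m₀ > 1, and let δ ≥ 1. Then there is a constant C > 0 (depending only on C₀ and the uniform bound on P_{−1/2}) such that |H^δ(e^{−r} i)| ≤ C μ_δ(e^{−r} i) for all r ≥ 0, where μ_δ(e^{−r} i) = δ e^{−(m₀ − 1) δ r}. -/
open MeasureTheory Real Complex Filter

/-!
On the geodesic `r ↦ e^{-r} i` the polar radius is `r`, so `H^δ(e^{-r} i)` is the product of
`H(e^{-δr} i)`, the ratio `sinh(δr)/sinh r` and `P_{-1/2}(cosh(δr))`. The first factor is at most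
`C₀ e^{-m₀δr}` and the ratio at most `δ e^{δr}`, since `sinh t ≤ t e^t` and `r ≤ sinh r`.
For the Legendre factor, with `b(φ) = c + √(c²-1) cos φ`, AM-GM gives
`b^{-1/2} ≤ (1 + b⁻¹)/2`, and `∫₀^{2π} b⁻¹ dφ = 2π/√(c² - (c²-1)) = 2π`; hence `0 ≤ P_{-1/2}(c) ≤ 1`
and the bound holds with `C = C₀`.
-/

theorem add_mul_cos_pos {A B : ℝ} (hAB : |B| < A) (φ : ℝ) : 0 < A + B * Real.cos φ := by
  have : |B * Real.cos φ| ≤ |B| := by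
    rw [abs_mul]
    exact mul_le_of_le_one_right (abs_nonneg _) (Real.abs_cos_le_one φ)
  linarith [neg_abs_le (B * Real.cos φ)]

theorem abs_sqrt_sq_sub_one_lt {c : ℝ} (hc : 0 < c) : |√(c ^ 2 - 1)| < c := by
  rw [abs_of_nonneg (Real.sqrt_nonneg _), Real.sqrt_lt' hc]
  linarith

/-- The naive antiderivative `(2/s) arctan(√((A-B)/(A+B)) tan(φ/2))` jumps at `φ = π`;
this form of it is smooth on all of `ℝ`. -/
theorem hasDerivAt_antideriv_inv_add_mul_cos {A B : ℝ} (hAB : |B| < A) (φ : ℝ) :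
    HasDerivAt
      (fun φ => (φ - 2 * Real.arctan (B * Real.sin φ / (A + √(A ^ 2 - B ^ 2) + B * Real.cos φ)))
        / √(A ^ 2 - B ^ 2))
      (A + B * Real.cos φ)⁻¹ φ := by
  set s := √(A ^ 2 - B ^ 2)
  have hs : 0 < s := Real.sqrt_pos.mpr (by nlinarith [abs_nonneg B, sq_abs B])
  have hs2 : s ^ 2 = A ^ 2 - B ^ 2 := Real.sq_sqrt (by nlinarith [abs_nonneg B, sq_abs B])
  have hD : 0 < A + s + B * Real.cos φ := by linarith [add_mul_cos_pos hAB φ]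
  have hb := add_mul_cos_pos hAB φ
  refine (((hasDerivAt_id' φ).sub ((((Real.hasDerivAt_sin φ).const_mul B).div
    (((Real.hasDerivAt_cos φ).const_mul B).const_add (A + s)) hD.ne').arctan.const_mul 2)).div_const
      s).congr_deriv ?_
  simp only [Pi.div_apply]
  field_simp
  linear_combination -(A + s + B * Real.cos φ) * (B ^ 2 * Real.sin_sq_add_cos_sq φ + hs2)

theorem integral_inv_add_mul_cos {A B : ℝ} (hAB : |B| < A) :
    ∫ φ in (0)..(2 * π), (A + B * Real.cos φ)⁻¹ = 2 * π / √(A ^ 2 - B ^ 2) := by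
  rw [intervalIntegral.integral_eq_sub_of_hasDerivAt
    (fun φ _ => hasDerivAt_antideriv_inv_add_mul_cos hAB φ)
    (Continuous.intervalIntegrable
      (by fun_prop (disch := exact fun φ => (add_mul_cos_pos hAB φ).ne')) _ _)]
  simp

theorem rpow_neg_half_le {b : ℝ} (hb : 0 < b) : b ^ (-(1 / 2) : ℝ) ≤ (1 + b⁻¹) / 2 := by
  have hb_inv : b⁻¹ = ((√b)⁻¹) ^ 2 := by rw [inv_pow, Real.sq_sqrt hb.le]
  rw [Real.rpow_neg hb.le, ← Real.sqrt_eq_rpow, hb_inv]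
  nlinarith [sq_nonneg ((√b)⁻¹ - 1)]

theorem legendreR_eq_intervalIntegral (a c : ℝ) :
    legendreR a c = (2 * π)⁻¹ * ∫ φ in (0)..(2 * π), (c + √(c ^ 2 - 1) * Real.cos φ) ^ a := by
  rw [legendreR, one_div, intervalIntegral.integral_of_le (by positivity),
    integral_Ioc_eq_integral_Ioo]

theorem abs_legendreR_neg_half_le_one {c : ℝ} (hc : 1 ≤ c) : |legendreR (-(1 / 2)) c| ≤ 1 := by
  set B := √(c ^ 2 - 1)
  have hBc : |B| < c := abs_sqrt_sq_sub_one_lt (by linarith)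
  have hpos := add_mul_cos_pos hBc
  have h2π : (0 : ℝ) ≤ 2 * π := by positivity
  have hinv : IntervalIntegrable (fun φ => (c + B * Real.cos φ)⁻¹) volume 0 (2 * π) :=
    Continuous.intervalIntegrable (by fun_prop (disch := exact fun φ => (hpos φ).ne')) _ _
  have hdiff : c ^ 2 - B ^ 2 = 1 := by rw [Real.sq_sqrt (by nlinarith)]; ring
  have hI_nonneg : 0 ≤ ∫ φ in (0)..(2 * π), (c + B * Real.cos φ) ^ (-(1 / 2) : ℝ) :=
    intervalIntegral.integral_nonneg h2π fun φ _ => Real.rpow_nonneg (hpos φ).le _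
  have hI_le : ∫ φ in (0)..(2 * π), (c + B * Real.cos φ) ^ (-(1 / 2) : ℝ) ≤ 2 * π :=
    calc ∫ φ in (0)..(2 * π), (c + B * Real.cos φ) ^ (-(1 / 2) : ℝ)
        ≤ ∫ φ in (0)..(2 * π), (1 + (c + B * Real.cos φ)⁻¹) / 2 :=
          intervalIntegral.integral_mono_on h2π
            ((Continuous.rpow_const (by fun_prop) fun φ => Or.inl (hpos φ).ne').intervalIntegrable
              _ _)
            ((intervalIntegrable_const.add hinv).div_const 2)
            (fun φ _ => rpow_neg_half_le (hpos φ))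
      _ = 2 * π := by
          rw [intervalIntegral.integral_div,
            intervalIntegral.integral_add intervalIntegrable_const hinv,
            integral_inv_add_mul_cos hBc, hdiff]
          simp
  rw [legendreR_eq_intervalIntegral, abs_of_nonneg (by positivity),
    inv_mul_le_iff₀ (by positivity), mul_one]
  exact hI_le

theorem sinh_le_mul_exp (t : ℝ) : Real.sinh t ≤ t * Real.exp t := by
  have h := Real.add_one_le_exp (-(2 * t))
  have he : Real.exp (-t) = Real.exp t * Real.exp (-(2 * t)) := by
    rw [← Real.exp_add]
    ring_nf
  rw [Real.sinh_eq, he]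
  nlinarith [Real.exp_pos t]

theorem abs_sinh_mul_div_sinh_le {δ r : ℝ} (hδ : 0 ≤ δ) (hr : 0 ≤ r) :
    |Real.sinh (δ * r) / Real.sinh r| ≤ δ * Real.exp (δ * r) := by
  have hsinh_r : 0 ≤ Real.sinh r := Real.sinh_nonneg_iff.mpr hr
  rw [abs_of_nonneg (div_nonneg (Real.sinh_nonneg_iff.mpr (by positivity)) hsinh_r)]
  rcases hr.eq_or_lt with rfl | hr_pos
  · simp only [Real.sinh_zero, div_zero]
    positivity
  rw [div_le_iff₀ (Real.sinh_pos_iff.mpr hr_pos)]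
  calc Real.sinh (δ * r) ≤ δ * r * Real.exp (δ * r) := sinh_le_mul_exp _
    _ = δ * Real.exp (δ * r) * r := by ring
    _ ≤ δ * Real.exp (δ * r) * Real.sinh r := by
        gcongr
        exact Real.self_le_sinh_iff.mpr hr

theorem coshDistI_ofReal_exp_neg_mul_I (r : ℝ) :
    coshDistI ((Real.exp (-r) : ℝ) * Complex.I) = Real.cosh r := by
  simp only [coshDistI, Complex.mul_I_re, Complex.mul_I_im, Complex.ofReal_re, Complex.ofReal_im]
  rw [Real.cosh_eq, Real.exp_neg]
  field_simp
  ring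

theorem radl_ofReal_exp_neg_mul_I {r : ℝ} (hr : 0 ≤ r) :
    radl ((Real.exp (-r) : ℝ) * Complex.I) = r := by
  change Real.arcosh (coshDistI _) = r
  rw [coshDistI_ofReal_exp_neg_mul_I, Real.arcosh_cosh hr]

theorem dilate_pointwise_bound_general
    (H : ℂ → ℝ)
    (C₀ m₀ : ℝ) (hC₀ : 0 < C₀)
    (hH : ∀ r : ℝ, 0 ≤ r →
      |H ((Real.exp (-r) : ℝ) * Complex.I)| ≤ C₀ * Real.exp (-m₀ * r)) :
    ∃ C > 0, ∀ δ : ℝ, 1 ≤ δ → ∀ r : ℝ, 0 ≤ r →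
      |dilate H δ ((Real.exp (-r) : ℝ) * Complex.I)| ≤
        C * (δ * Real.exp (-(m₀ - 1) * δ * r)) := by
  refine ⟨C₀, hC₀, fun δ hδ r hr => ?_⟩
  have hδ₀ : 0 ≤ δ := zero_le_one.trans hδ
  have hδr : 0 ≤ δ * r := mul_nonneg hδ₀ hr
  rw [dilate, radl_ofReal_exp_neg_mul_I hr, abs_mul, abs_mul]
  calc _ ≤ C₀ * Real.exp (-m₀ * (δ * r)) * (δ * Real.exp (δ * r)) * 1 := by
        gcongr
        · exact hH _ hδr
        · exact abs_sinh_mul_div_sinh_le hδ₀ hr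
        · exact abs_legendreR_neg_half_le_one (Real.one_le_cosh _)
    _ = C₀ * (δ * Real.exp (-(m₀ - 1) * δ * r)) := by
        rw [show -(m₀ - 1) * δ * r = -m₀ * (δ * r) + δ * r by ring, Real.exp_add]
        ring

/-- **Lemma B.8.** If `H` is `SO(2)`-invariant with `|H(e^{−r}i)| ≤ C₀ e^{−m₀ r}`, `m₀ > 1`,
then there is `C > 0` (independent of `δ`) with
`|H^δ(e^{−r}i)| ≤ C μ_δ(e^{−r}i) = C δ e^{−(m₀−1)δr}` for all `δ ≥ 1`, `r ≥ 0`. -/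
theorem dilate_pointwise_bound
    (H : ℂ → ℝ) (hinv : SO2Invariant H)
    (C₀ m₀ : ℝ) (hC₀ : 0 < C₀) (hm₀ : 1 < m₀)
    (hH : ∀ r : ℝ, 0 ≤ r →
      |H ((Real.exp (-r) : ℝ) * Complex.I)| ≤ C₀ * Real.exp (-m₀ * r)) :
    ∃ C > 0, ∀ δ : ℝ, 1 ≤ δ → ∀ r : ℝ, 0 ≤ r →
      |dilate H δ ((Real.exp (-r) : ℝ) * Complex.I)| ≤
        C * (δ * Real.exp (-(m₀ - 1) * δ * r)) :=
  dilate_pointwise_bound_general H C₀ m₀ hC₀ hH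
end

section
/- Let f_ε be a bi-invariant probability density on SL(2,ℝ), identified with an SO(2)-invariant nonnegative function on ℍ with 2π ∫_0^∞ f_ε(e^{−s}i) sinh s ds = 1, and suppose ∫_{r−ξ₀r}^{r+ξ₀r} f_ε(e^{−s} i) sinh s ds ≤ C e^{−(ξ−ξ₀) r} for all r > 0, where 0 < ξ₀ < 1 and ξ > 1 + ξ₀. Let H : ℍ → ℝ be SO(2)-invariant such that H(e^{−r} i) is bounded, monotonically decreasing in r, and satisfies H(e^{−r} i) ≤ C e^{−m₀ r} with m₀ ξ₀ > ξ. Then there is a constant C' > 0 such that for every δ ≥ 1 and every r > 0, (f_ε * H^δ)(e^{−r} i) ≤ C' δ e^{−(ξ − ξ₀) r}. -/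
/-!
Split the `s`-integral defining the convolution at the band `|s - r| ≤ ξ₀ r`. By the
hyperbolic law of cosines the point `e^s · k_{-φ} · (e^{-r} i)` lies at distance at least
`|s - r|` from `i`, and at distance `ρ` the dilation is at most `C δ e^{-(m₀-1)ρ}`, because
`0 ≤ P_{-1/2} ≤ 1` and `sinh (δρ) / sinh ρ ≤ δ e^{(δ-1)ρ}` (Bernoulli). Inside the band the
weight is at most `C δ` and the density has mass at most `C e^{-(ξ-ξ₀)r}`; outside it the
weight is at most `C δ e^{-(m₀-1)ξ₀ r} ≤ C δ e^{-(ξ-ξ₀)r}` and the density has total mass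
`1/2π`.
-/

open MeasureTheory Real Complex Filter

open Set

namespace Real

lemma cosh_add_sinh_mul_cos_pos (t φ : ℝ) : 0 < cosh t + sinh t * cos φ := by
  nlinarith [cosh_sq' t, cosh_pos t, neg_one_le_cos φ, cos_le_one φ, sin_sq_add_cos_sq φ,
    sq_nonneg (sinh t * cos φ + cosh t), sq_nonneg (sinh t)]

lemma sqrt_cosh_sq_sub_one {t : ℝ} (ht : 0 ≤ t) : √(cosh t ^ 2 - 1) = sinh t := by
  rw [← sinh_arcosh (one_le_cosh t), arcosh_cosh ht]

lemma integral_inv_cosh_add_sinh_mul_cos (t : ℝ) :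
    ∫ φ in Ioo 0 (2 * π), (cosh t + sinh t * cos φ)⁻¹ = 2 * π := by
  have hpos := cosh_add_sinh_mul_cos_pos t
  have hden : ∀ x, 1 + cosh t + sinh t * cos x ≠ 0 := fun x => by linarith [hpos x]
  -- antiderivative from the half-angle substitution
  have hderiv : ∀ x, HasDerivAt
      (fun y => y - 2 * arctan (sinh t * sin y / (1 + cosh t + sinh t * cos y)))
      (cosh t + sinh t * cos x)⁻¹ x := by
    intro x
    have h := (hasDerivAt_id' x).sub ((((hasDerivAt_sin x).const_mul (sinh t)).div
      (((hasDerivAt_cos x).const_mul (sinh t)).const_add (1 + cosh t)) (hden x)).arctan.const_mul 2)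
    refine h.congr_deriv ?_
    have := hpos x
    have := hden x
    simp only [Pi.div_apply]
    field_simp
    linear_combination
      (1 + cosh t + sinh t * cos x) * (cosh_sq' t - sinh t ^ 2 * sin_sq_add_cos_sq x)
  have hcont : Continuous fun x => (cosh t + sinh t * cos x)⁻¹ :=
    (continuous_const.add (continuous_const.mul continuous_cos)).inv₀ fun x => (hpos x).ne'
  rw [← integral_Ioc_eq_integral_Ioo, ← intervalIntegral.integral_of_le two_pi_pos.le,
    intervalIntegral.integral_eq_sub_of_hasDerivAt (fun x _ => hderiv x)
      (hcont.intervalIntegrable _ _)]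
  simp

lemma rpow_neg_half_le {u : ℝ} (hu : 0 < u) : u ^ (-(1 / 2) : ℝ) ≤ (1 + u⁻¹) / 2 := by
  have h := geom_mean_le_arith_mean2_weighted (p₁ := 1) (p₂ := u⁻¹) (w₁ := 1 / 2) (w₂ := 1 / 2)
    (by norm_num) (by norm_num) zero_le_one (inv_nonneg.2 hu.le) (by norm_num)
  rw [one_rpow, one_mul, inv_rpow hu.le, ← rpow_neg hu.le] at h
  linarith

lemma sinh_mul_div_sinh_le {ρ δ : ℝ} (hρ : 0 ≤ ρ) (hδ : 1 ≤ δ) :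
    sinh (δ * ρ) / sinh ρ ≤ δ * exp ((δ - 1) * ρ) := by
  refine div_le_of_le_mul₀ (sinh_nonneg_iff.2 hρ) (by positivity) ?_
  -- Bernoulli's inequality for `x = exp (-2ρ)`: `1 + δ (x - 1) ≤ x ^ δ`
  have hbern := one_add_mul_self_le_rpow_one_add
    (by linarith [exp_pos (-2 * ρ)] : -1 ≤ exp (-2 * ρ) - 1) hδ
  rw [add_sub_cancel, ← exp_mul] at hbern
  have h := mul_le_mul_of_nonneg_left hbern (exp_pos (δ * ρ)).le
  rw [sinh_eq, sinh_eq]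
  have e1 : exp (δ * ρ) * exp (-2 * ρ * δ) = exp (-(δ * ρ)) := by rw [← exp_add]; ring_nf
  have e2 : exp (δ * ρ) * exp (-2 * ρ) = exp ((δ - 1) * ρ) * exp (-ρ) := by
    rw [← exp_add, ← exp_add]; ring_nf
  have e3 : exp (δ * ρ) = exp ((δ - 1) * ρ) * exp ρ := by rw [← exp_add]; ring_nf
  nlinarith

lemma cos_sq_add_sin_sq_mul_sq_pos (φ : ℝ) {y : ℝ} (hy : 0 < y) :
    0 < cos φ ^ 2 + sin φ ^ 2 * y ^ 2 := by
  have h := sin_sq_add_cos_sq φ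
  by_contra! hle
  have hc : cos φ ^ 2 = 0 := by nlinarith [sq_nonneg (cos φ), sq_nonneg (sin φ * y)]
  nlinarith [mul_pos hy hy]

end Real

namespace MeasureTheory

variable {α : Type*} [MeasurableSpace α] {μ : Measure α}

lemma setIntegral_le_of_forall_le {S : Set α} {f : α → ℝ} {c : ℝ} (hS : MeasurableSet S)
    (hμS : μ S ≠ ⊤) (hc : 0 ≤ c) (hf : ∀ x ∈ S, f x ≤ c) :
    ∫ x in S, f x ∂μ ≤ μ.real S * c := by
  by_cases hfi : IntegrableOn f S μ
  · simpa [setIntegral_const] using setIntegral_mono_on hfi (integrableOn_const hμS) hS hf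
  · rw [integral_undef hfi]
    positivity

lemma setIntegral_le_of_le_mul {S B : Set α} {F G : α → ℝ} {a b : ℝ} (hS : MeasurableSet S)
    (hB : MeasurableSet B) (hBS : B ⊆ S) (hF : IntegrableOn F S μ) (hF0 : ∀ x ∈ S, 0 ≤ F x)
    (ha : 0 ≤ a) (hb : 0 ≤ b) (hGB : ∀ x ∈ B, G x ≤ a * F x)
    (hGS : ∀ x ∈ S \ B, G x ≤ b * F x) :
    ∫ x in S, G x ∂μ ≤ a * ∫ x in B, F x ∂μ + b * ∫ x in S, F x ∂μ := by
  have hF0B : 0 ≤ ∫ x in B, F x ∂μ := setIntegral_nonneg hB fun x hx => hF0 x (hBS hx)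
  have hF0S : 0 ≤ ∫ x in S, F x ∂μ := setIntegral_nonneg hS hF0
  by_cases hG : IntegrableOn G S μ
  swap
  · rw [integral_undef hG]
    positivity
  rw [← integral_inter_add_sdiff hB hG, inter_eq_self_of_subset_right hBS]
  gcongr ?_ + ?_
  · rw [← integral_const_mul]
    exact setIntegral_mono_on (hG.mono_set hBS) ((hF.mono_set hBS).const_mul a) hB hGB
  · calc ∫ x in S \ B, G x ∂μ ≤ ∫ x in S \ B, b * F x ∂μ :=
          setIntegral_mono_on (hG.mono_set sdiff_subset) ((hF.mono_set sdiff_subset).const_mul b)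
            (hS.diff hB) hGS
      _ = b * ∫ x in S \ B, F x ∂μ := integral_const_mul b _
      _ ≤ b * ∫ x in S, F x ∂μ := mul_le_mul_of_nonneg_left (setIntegral_mono_set hF
          ((ae_restrict_iff' hS).2 (ae_of_all _ hF0)) sdiff_subset.eventuallyLE) hb

end MeasureTheory

lemma legendreR_cosh (a : ℝ) {t : ℝ} (ht : 0 ≤ t) :
    legendreR a (Real.cosh t) =
      (2 * π)⁻¹ * ∫ φ in Ioo 0 (2 * π), (Real.cosh t + Real.sinh t * Real.cos φ) ^ a := by
  rw [legendreR, Real.sqrt_cosh_sq_sub_one ht, one_div]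

lemma legendreR_neg_half_cosh_nonneg {t : ℝ} (ht : 0 ≤ t) :
    0 ≤ legendreR (-(1 / 2)) (Real.cosh t) := by
  rw [legendreR_cosh _ ht]
  exact mul_nonneg (by positivity) (setIntegral_nonneg measurableSet_Ioo fun φ _ =>
    Real.rpow_nonneg (Real.cosh_add_sinh_mul_cos_pos t φ).le _)

lemma legendreR_neg_half_cosh_le_one {t : ℝ} (ht : 0 ≤ t) :
    legendreR (-(1 / 2)) (Real.cosh t) ≤ 1 := by
  have hpos := Real.cosh_add_sinh_mul_cos_pos t
  have hcont : Continuous fun φ => Real.cosh t + Real.sinh t * Real.cos φ := by fun_prop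
  have hinv :
      IntegrableOn (fun φ => (Real.cosh t + Real.sinh t * Real.cos φ)⁻¹) (Ioo 0 (2 * π)) :=
    (hcont.inv₀ fun φ => (hpos φ).ne').integrableOn_Icc.mono_set Ioo_subset_Icc_self
  have hconst : IntegrableOn (fun _ => (1 : ℝ)) (Ioo 0 (2 * π)) :=
    integrableOn_const measure_Ioo_lt_top.ne
  have hmajorant :
      ∫ φ in Ioo 0 (2 * π), (1 + (Real.cosh t + Real.sinh t * Real.cos φ)⁻¹) / 2 = 2 * π := by
    rw [integral_div, integral_add hconst hinv, Real.integral_inv_cosh_add_sinh_mul_cos,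
      setIntegral_const, volume_real_Ioo_of_le Real.two_pi_pos.le]
    simp
  rw [legendreR_cosh _ ht, inv_mul_le_one₀ (by positivity)]
  refine le_trans ?_ hmajorant.le
  exact setIntegral_mono_on
    ((hcont.rpow_const fun φ => Or.inl (hpos φ).ne').integrableOn_Icc.mono_set
      Ioo_subset_Icc_self)
    ((hconst.add hinv).div_const 2) measurableSet_Ioo fun φ _ => Real.rpow_neg_half_le (hpos φ)

lemma dilate_le {H : ℂ → ℝ} {C m δ : ℝ} (hC : 0 ≤ C) (hm : 1 ≤ m) (hδ : 1 ≤ δ)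
    (hH : ∀ r, 0 ≤ r → H (Real.exp (-r) * I) ≤ C * Real.exp (-m * r))
    {z : ℂ} (hz : 0 ≤ radl z) :
    dilate H δ z ≤ C * δ * Real.exp (-(m - 1) * radl z) := by
  set ρ := radl z
  have hδρ : 0 ≤ δ * ρ := by positivity
  have hratio : 0 ≤ Real.sinh (δ * ρ) / Real.sinh ρ :=
    div_nonneg (Real.sinh_nonneg_iff.2 hδρ) (Real.sinh_nonneg_iff.2 hz)
  have hP := legendreR_neg_half_cosh_le_one hδρ
  have hweight : Real.sinh (δ * ρ) / Real.sinh ρ * legendreR (-(1 / 2)) (Real.cosh (δ * ρ)) ≤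
      δ * Real.exp ((δ - 1) * ρ) :=
    calc _ ≤ Real.sinh (δ * ρ) / Real.sinh ρ * 1 := by gcongr
      _ ≤ δ * Real.exp ((δ - 1) * ρ) := by rw [mul_one]; exact Real.sinh_mul_div_sinh_le hz hδ
  calc dilate H δ z = H (Real.exp (-(δ * ρ)) * I) *
        (Real.sinh (δ * ρ) / Real.sinh ρ * legendreR (-(1 / 2)) (Real.cosh (δ * ρ))) := by
        rw [dilate, mul_assoc]
    _ ≤ C * Real.exp (-m * (δ * ρ)) * (δ * Real.exp ((δ - 1) * ρ)) := by
        gcongr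
        · exact mul_nonneg hratio (legendreR_neg_half_cosh_nonneg hδρ)
        · exact hH _ hδρ
    _ = C * δ * Real.exp (-m * (δ * ρ) + (δ - 1) * ρ) := by
        rw [mul_mul_mul_comm, ← Real.exp_add]
    _ ≤ C * δ * Real.exp (-(m - 1) * ρ) := by
        gcongr
        nlinarith [mul_nonneg (mul_nonneg (sub_nonneg.2 hm) (sub_nonneg.2 hδ)) hz]

lemma radl_eq_arcosh (z : ℂ) : radl z = Real.arcosh (coshDistI z) := rfl

lemma moebius_kmat_neg_mul_I (φ : ℝ) {y : ℝ} (hy : 0 < y) :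
    moebius (kmat (-φ)) (y * I) =
      ⟨Real.cos φ * Real.sin φ * (y ^ 2 - 1) / (Real.cos φ ^ 2 + Real.sin φ ^ 2 * y ^ 2),
        y / (Real.cos φ ^ 2 + Real.sin φ ^ 2 * y ^ 2)⟩ := by
  have hD := (Real.cos_sq_add_sin_sq_mul_sq_pos φ hy).ne'
  have hcs := Real.cos_sq_add_sin_sq φ
  simp only [moebius, kmat, Real.cos_neg, Real.sin_neg]
  simp [-Complex.ofReal_cos, -Complex.ofReal_sin]
  generalize Real.cos φ = c at *
  generalize Real.sin φ = s at *
  have hden : (s : ℂ) * (y * I) + c ≠ 0 := fun h => hD <| by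
    have hre := congrArg Complex.re h
    have him := congrArg Complex.im h
    simp only [add_re, add_im, mul_re, mul_im, ofReal_re, ofReal_im, I_re, I_im, zero_re,
      zero_im] at hre him
    nlinarith [mul_pos hy hy]
  rw [div_eq_iff hden]
  apply Complex.ext <;> simp only [mul_re, mul_im, add_re, add_im, neg_re, neg_im, ofReal_re,
    ofReal_im, I_re, I_im] <;> rw [div_mul_eq_mul_div, div_mul_eq_mul_div]
  · rw [← sub_div, eq_div_iff hD]
    linear_combination (-s * y ^ 2) * hcs
  · rw [← add_div, eq_div_iff hD]
    linear_combination (c * y) * hcs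

lemma coshDistI_exp_mul_moebius_kmat (r s φ : ℝ) :
    coshDistI (Real.exp s * moebius (kmat (-φ)) (Real.exp (-r) * I)) =
      Real.cosh (s - r) + 2 * Real.sin φ ^ 2 * Real.sinh s * Real.sinh r := by
  have hE := Real.exp_pos s
  have hX := Real.exp_pos (-r)
  have hD := (Real.cos_sq_add_sin_sq_mul_sq_pos φ hX).ne'
  rw [moebius_kmat_neg_mul_I φ hX, coshDistI, re_ofReal_mul, im_ofReal_mul]
  have e1 : Real.exp (s - r) = Real.exp s * Real.exp (-r) := by rw [← Real.exp_add]; ring_nf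
  have e2 : Real.exp (-(s - r)) = (Real.exp s)⁻¹ * (Real.exp (-r))⁻¹ := by
    rw [← Real.exp_neg, ← Real.exp_neg, ← Real.exp_add]; ring_nf
  have e3 : Real.exp r = (Real.exp (-r))⁻¹ := by rw [← Real.exp_neg, neg_neg]
  rw [Real.cosh_eq, Real.sinh_eq, Real.sinh_eq, e1, e2, e3, Real.exp_neg s]
  simp only [div_pow, mul_pow, Real.cos_sq'] at hD ⊢
  generalize Real.exp s = E at *
  generalize Real.exp (-r) = X at *
  generalize Real.sin φ = σ at *
  field_simp
  ring

lemma abs_sub_le_radl {r s : ℝ} (hr : 0 ≤ r) (hs : 0 ≤ s) (φ : ℝ) :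
    |s - r| ≤ radl (Real.exp s * moebius (kmat (-φ)) (Real.exp (-r) * I)) := by
  have hcosh : Real.cosh |s - r| ≤
      coshDistI (Real.exp s * moebius (kmat (-φ)) (Real.exp (-r) * I)) := by
    rw [Real.cosh_abs, coshDistI_exp_mul_moebius_kmat]
    have := mul_nonneg (Real.sinh_nonneg_iff.2 hs) (Real.sinh_nonneg_iff.2 hr)
    nlinarith [sq_nonneg (Real.sin φ)]
  rw [radl_eq_arcosh, ← Real.arcosh_cosh (abs_nonneg (s - r))]
  exact (Real.arcosh_le_arcosh (Real.cosh_pos _) ((Real.cosh_pos _).trans_le hcosh)).2 hcosh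

lemma integral_mul_dilate_le {fε H : ℂ → ℝ} {C m δ ξ₀ r : ℝ} (hεpos : ∀ z, 0 ≤ fε z)
    (hεint : IntegrableOn (fun s => fε (Real.exp (-s) * I) * Real.sinh s) (Ioi 0))
    (hC : 0 ≤ C) (hm : 1 ≤ m) (hδ : 1 ≤ δ)
    (hH : ∀ r, 0 ≤ r → H (Real.exp (-r) * I) ≤ C * Real.exp (-m * r))
    (hξ₀1 : ξ₀ < 1) (hr : 0 < r) (φ : ℝ) :
    ∫ s in Ioi 0, fε (Real.exp (-s) * I) *
        dilate H δ (Real.exp s * moebius (kmat (-φ)) (Real.exp (-r) * I)) * Real.sinh s ≤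
      C * δ * (∫ s in Icc (r - ξ₀ * r) (r + ξ₀ * r), fε (Real.exp (-s) * I) * Real.sinh s) +
        C * δ * Real.exp (-(m - 1) * (ξ₀ * r)) *
          ∫ s in Ioi 0, fε (Real.exp (-s) * I) * Real.sinh s := by
  have hF0 : ∀ s ∈ Ioi (0 : ℝ), 0 ≤ fε (Real.exp (-s) * I) * Real.sinh s := fun s hs =>
    mul_nonneg (hεpos _) (Real.sinh_nonneg_iff.2 (le_of_lt hs))
  have hpt : ∀ s ∈ Ioi (0 : ℝ), fε (Real.exp (-s) * I) *
      dilate H δ (Real.exp s * moebius (kmat (-φ)) (Real.exp (-r) * I)) * Real.sinh s ≤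
        C * δ * Real.exp (-(m - 1) * |s - r|) * (fε (Real.exp (-s) * I) * Real.sinh s) := by
    intro s hs
    have hrad := abs_sub_le_radl hr.le (le_of_lt hs) φ
    have hdil := (dilate_le hC hm hδ hH ((abs_nonneg _).trans hrad)).trans
      (mul_le_mul_of_nonneg_left (Real.exp_le_exp.2 (by nlinarith)) (by positivity) :
        _ ≤ C * δ * Real.exp (-(m - 1) * |s - r|))
    calc _ = dilate H δ (Real.exp s * moebius (kmat (-φ)) (Real.exp (-r) * I)) *
          (fε (Real.exp (-s) * I) * Real.sinh s) := by ring
      _ ≤ _ := mul_le_mul_of_nonneg_right hdil (hF0 s hs)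
  have hBS : Icc (r - ξ₀ * r) (r + ξ₀ * r) ⊆ Ioi 0 := fun s hs =>
    mem_Ioi.2 (by nlinarith [hs.1])
  refine setIntegral_le_of_le_mul measurableSet_Ioi measurableSet_Icc hBS hεint hF0
    (by positivity) (by positivity) (fun s hs => (hpt s (hBS hs)).trans ?_)
    (fun s hs => (hpt s hs.1).trans ?_)
  · have hF := hF0 s (hBS hs)
    have hweight : Real.exp (-(m - 1) * |s - r|) ≤ 1 :=
      Real.exp_le_one_iff.2 (by nlinarith [abs_nonneg (s - r)])
    calc _ ≤ C * δ * 1 * (fε (Real.exp (-s) * I) * Real.sinh s) := by gcongr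
      _ = _ := by ring
  · have hfar : ξ₀ * r < |s - r| := by
      have := hs.2
      rwa [← Real.closedBall_eq_Icc, Metric.mem_closedBall, Real.dist_eq, not_le] at this
    exact mul_le_mul_of_nonneg_right (mul_le_mul_of_nonneg_left
      (Real.exp_le_exp.2 (by nlinarith)) (by positivity)) (hF0 s hs.1)

section
open MeasureTheory Real Complex Filter

theorem conv_dilate_pointwise_decay_general
    (fε H : ℂ → ℝ)
    (hεpos : ∀ z, 0 ≤ fε z)
    (hεnorm : 2 * π *
      ∫ s in Set.Ioi (0:ℝ), fε ((Real.exp (-s) : ℝ) * Complex.I) * Real.sinh s = 1)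
    (ξ₀ ξ m₀ C : ℝ) (hξ₀ : 0 < ξ₀) (hξ₀1 : ξ₀ < 1) (hξ : 1 + ξ₀ < ξ) (hm₀ : ξ < m₀ * ξ₀)
    (hC : 0 < C)
    (hεtail : ∀ r : ℝ, 0 < r →
      (∫ s in Set.Icc (r - ξ₀ * r) (r + ξ₀ * r),
          fε ((Real.exp (-s) : ℝ) * Complex.I) * Real.sinh s) ≤
        C * Real.exp (-(ξ - ξ₀) * r))
    (hHtail : ∀ r : ℝ, 0 ≤ r →
      H ((Real.exp (-r) : ℝ) * Complex.I) ≤ C * Real.exp (-m₀ * r)) :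
    ∃ C' > 0, ∀ δ : ℝ, 1 ≤ δ → ∀ r : ℝ, 0 < r →
      convPolar fε (dilate H δ) ((Real.exp (-r) : ℝ) * Complex.I) ≤
        C' * δ * Real.exp (-(ξ - ξ₀) * r) := by
  have hm : 1 ≤ m₀ := by nlinarith
  have hεint : IntegrableOn (fun s => fε (Real.exp (-s) * I) * Real.sinh s) (Set.Ioi 0) :=
    Integrable.of_integral_ne_zero fun h => by simp only [h, mul_zero, zero_ne_one] at hεnorm
  have hεmass := eq_inv_of_mul_eq_one_right hεnorm
  refine ⟨2 * π * (2 * π) * (C * (C + (2 * π)⁻¹)), by positivity, fun δ hδ r hr => ?_⟩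
  have hdecay : Real.exp (-(m₀ - 1) * (ξ₀ * r)) ≤ Real.exp (-(ξ - ξ₀) * r) :=
    Real.exp_le_exp.2 (by nlinarith)
  have hinner : ∀ φ, ∫ s in Set.Ioi 0, fε (Real.exp (-s) * I) *
      dilate H δ (Real.exp s * moebius (kmat (-φ)) (Real.exp (-r) * I)) * Real.sinh s ≤
        C * (C + (2 * π)⁻¹) * δ * Real.exp (-(ξ - ξ₀) * r) := fun φ =>
    calc _ ≤ _ := integral_mul_dilate_le hεpos hεint hC.le hm hδ hHtail hξ₀1 hr φ
      _ ≤ C * δ * (C * Real.exp (-(ξ - ξ₀) * r)) +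
          C * δ * Real.exp (-(ξ - ξ₀) * r) * (2 * π)⁻¹ := by
        rw [hεmass]
        gcongr
        exact hεtail r hr
      _ = _ := by ring
  calc convPolar fε (dilate H δ) (Real.exp (-r) * I)
      ≤ 2 * π * (volume.real (Set.Ioo 0 (2 * π)) *
          (C * (C + (2 * π)⁻¹) * δ * Real.exp (-(ξ - ξ₀) * r))) :=
        mul_le_mul_of_nonneg_left (setIntegral_le_of_forall_le measurableSet_Ioo
          measure_Ioo_lt_top.ne (by positivity) fun φ _ => hinner φ) (by positivity)
    _ = _ := by rw [Real.volume_real_Ioo_of_le two_pi_pos.le]; ring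

/-- **Lemma B.9.** If the bi-invariant density `f_ε` has the band-mass bound
`∫_{r−ξ₀r}^{r+ξ₀r} f_ε(e^{−s}i) sinh s ds ≤ C e^{−(ξ−ξ₀)r}` for `0 < ξ₀ < 1`, `ξ > 1+ξ₀`,
and `H` is `SO(2)`-invariant, bounded, monotonically decreasing in `r` with
`H(e^{−r}i) ≤ C e^{−m₀ r}` for `m₀ ξ₀ > ξ`, then
`(f_ε * H^δ)(e^{−r}i) ≤ C' δ e^{−(ξ−ξ₀)r}` for all `δ ≥ 1`, `r > 0`. -/
theorem conv_dilate_pointwise_decay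
    (fε H : ℂ → ℝ)
    (hεinv : SO2Invariant fε) (hεpos : ∀ z, 0 ≤ fε z)
    (hεnorm : 2 * π *
      ∫ s in Set.Ioi (0:ℝ), fε ((Real.exp (-s) : ℝ) * Complex.I) * Real.sinh s = 1)
    (ξ₀ ξ m₀ C : ℝ) (hξ₀ : 0 < ξ₀) (hξ₀1 : ξ₀ < 1) (hξ : 1 + ξ₀ < ξ) (hm₀ : ξ < m₀ * ξ₀)
    (hC : 0 < C)
    (hεtail : ∀ r : ℝ, 0 < r →
      (∫ s in Set.Icc (r - ξ₀ * r) (r + ξ₀ * r),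
          fε ((Real.exp (-s) : ℝ) * Complex.I) * Real.sinh s) ≤
        C * Real.exp (-(ξ - ξ₀) * r))
    (hHinv : SO2Invariant H)
    (hHbdd : ∃ B : ℝ, ∀ r : ℝ, 0 ≤ r → |H ((Real.exp (-r) : ℝ) * Complex.I)| ≤ B)
    (hHmono : ∀ r₁ r₂ : ℝ, 0 ≤ r₁ → r₁ ≤ r₂ →
      H ((Real.exp (-r₂) : ℝ) * Complex.I) ≤ H ((Real.exp (-r₁) : ℝ) * Complex.I))
    (hHtail : ∀ r : ℝ, 0 ≤ r →
      H ((Real.exp (-r) : ℝ) * Complex.I) ≤ C * Real.exp (-m₀ * r)) :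
    ∃ C' > 0, ∀ δ : ℝ, 1 ≤ δ → ∀ r : ℝ, 0 < r →
      convPolar fε (dilate H δ) ((Real.exp (-r) : ℝ) * Complex.I) ≤
        C' * δ * Real.exp (-(ξ - ξ₀) * r) :=
  conv_dilate_pointwise_decay_general fε H hεpos hεnorm ξ₀ ξ m₀ C hξ₀ hξ₀1 hξ hm₀ hC hεtail hHtail

end
end
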